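/- Factorization of the determinant c(m+1) in terms of normalized quantities: for a polynomial f of degree n with all relevant a_{n-i} ≠ 0, setting β(j)_i = b(j)_i/((n-i+j)·a_{n-j}·a_{n+j-i}), one has c(m+1) = (∏_{i=1}^m a_{n-i})² · det M, where M is the m×m matrix with (p,q)-entry (n - max(p,q))·β(min(p,q))_{p+q}. -/

import Mathlib

open Finset

noncomputable section

/-- The quadratic quantities `b(j)_i` attached to coefficients `a` of a polynomial of
degree `n` (with `a m = 0` for `m < 0`). -/
def sturmB {K : Type*} [Field K] (a : ℤ → K) (n : ℕ) (j : ℕ) (i : ℤ) : K :=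
  (n : K) * ∑ p ∈ range j, ((i : K) - 2 * p) * a ((n : ℤ) - p) * a ((n : ℤ) - i + p)
    - (j : K) * ((n : K) - (i : K) + (j : K)) * a ((n : ℤ) - j) * a ((n : ℤ) + j - i)

/-- The normalized quantities `β(j)_i = b(j)_i/((n-i+j)·a_{n-j}·a_{n+j-i})`. -/
def sturmBeta {K : Type*} [Field K] (a : ℤ → K) (n : ℕ) (j : ℕ) (i : ℤ) : K :=
  sturmB a n j i / (((n : K) - (i : K) + (j : K)) * a ((n : ℤ) - j) * a ((n : ℤ) + j - i))

lemma sturm_entry_key {K : Type*} [Field K] [CharZero K]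
    (a : ℤ → K) (n m : ℕ) (hn : 2 * m < n)
    (ha : ∀ i : ℕ, 1 ≤ i → i ≤ m → a ((n : ℤ) - i) ≠ 0) (p q : Fin m) :
    ((n : K) - (max (p.1 + 1) (q.1 + 1) : ℕ))
        * sturmBeta a n (min (p.1 + 1) (q.1 + 1)) ((p.1 : ℤ) + q.1 + 2)
      = (a ((n : ℤ) - (p.1 + 1 : ℕ)))⁻¹ *
          ((a ((n : ℤ) - (q.1 + 1 : ℕ)))⁻¹ *
            sturmB a n (min (p.1 + 1) (q.1 + 1)) ((p.1 : ℤ) + q.1 + 2)) := by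
  have hp : a ((n : ℤ) - (p.1 + 1 : ℕ)) ≠ 0 := ha _ (by omega) (by omega)
  have hq : a ((n : ℤ) - (q.1 + 1 : ℕ)) ≠ 0 := ha _ (by omega) (by omega)
  rcases le_total p.1 q.1 with h | h
  · rw [min_eq_left (by omega), max_eq_right (by omega)]
    have hnq : (n : K) - ((q.1 + 1 : ℕ) : K) ≠ 0 := by
      have : ((q.1 + 1 : ℕ) : K) ≠ (n : K) := by
        exact_mod_cast (by omega : (q.1 + 1 : ℕ) ≠ n)
      exact sub_ne_zero.mpr this.symm
    unfold sturmBeta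
    have e1 : (n : K) - (((p.1 : ℤ) + q.1 + 2 : ℤ) : K) + ((p.1 + 1 : ℕ) : K)
        = (n : K) - ((q.1 + 1 : ℕ) : K) := by push_cast; ring
    have e2 : (n : ℤ) + (p.1 + 1 : ℕ) - ((p.1 : ℤ) + q.1 + 2)
        = (n : ℤ) - (q.1 + 1 : ℕ) := by push_cast; ring
    rw [e1, e2, mul_div_assoc',
      show ((n : K) - ((q.1 + 1 : ℕ) : K)) * a ((n : ℤ) - (p.1 + 1 : ℕ)) *
          a ((n : ℤ) - (q.1 + 1 : ℕ))
        = ((n : K) - ((q.1 + 1 : ℕ) : K)) *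
          (a ((n : ℤ) - (p.1 + 1 : ℕ)) * a ((n : ℤ) - (q.1 + 1 : ℕ))) from by ring,
      mul_comm ((n : K) - ((q.1 + 1 : ℕ) : K)) (sturmB a n (p.1 + 1) ((p.1 : ℤ) + q.1 + 2)),
      mul_div_assoc, div_mul_cancel_left₀ hnq, mul_inv]
    ring
  · rw [min_eq_right (by omega), max_eq_left (by omega)]
    have hnp : (n : K) - ((p.1 + 1 : ℕ) : K) ≠ 0 := by
      have : ((p.1 + 1 : ℕ) : K) ≠ (n : K) := by
        exact_mod_cast (by omega : (p.1 + 1 : ℕ) ≠ n)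
      exact sub_ne_zero.mpr this.symm
    unfold sturmBeta
    have e1 : (n : K) - (((p.1 : ℤ) + q.1 + 2 : ℤ) : K) + ((q.1 + 1 : ℕ) : K)
        = (n : K) - ((p.1 + 1 : ℕ) : K) := by push_cast; ring
    have e2 : (n : ℤ) + (q.1 + 1 : ℕ) - ((p.1 : ℤ) + q.1 + 2)
        = (n : ℤ) - (p.1 + 1 : ℕ) := by push_cast; ring
    rw [e1, e2, mul_div_assoc',
      show ((n : K) - ((p.1 + 1 : ℕ) : K)) * a ((n : ℤ) - (q.1 + 1 : ℕ)) *
          a ((n : ℤ) - (p.1 + 1 : ℕ))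
        = ((n : K) - ((p.1 + 1 : ℕ) : K)) *
          (a ((n : ℤ) - (q.1 + 1 : ℕ)) * a ((n : ℤ) - (p.1 + 1 : ℕ))) from by ring,
      mul_comm ((n : K) - ((p.1 + 1 : ℕ) : K)) (sturmB a n (q.1 + 1) ((p.1 : ℤ) + q.1 + 2)),
      mul_div_assoc, div_mul_cancel_left₀ hnp, mul_inv]
    ring

/-- Factorization 1.7 of the determinant `c(m+1)`:
`c(m+1) = (∏_{i=1}^m a_{n-i})² · det M`, where `M` is the `m×m` matrix with
`(p,q)`-entry `(n - max(p,q))·β(min(p,q))_{p+q}` (1-based indices). -/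
theorem c_det_factorization {K : Type*} [Field K] [CharZero K]
    (a : ℤ → K) (n m : ℕ) (hn : 2 * m < n) (haneg : ∀ k : ℤ, k < 0 → a k = 0)
    (ha : ∀ i : ℕ, 1 ≤ i → i ≤ m → a ((n : ℤ) - i) ≠ 0) :
    Matrix.det (Matrix.of fun p q : Fin m =>
        sturmB a n (min (p.1 + 1) (q.1 + 1)) ((p.1 : ℤ) + q.1 + 2))
      = (∏ i ∈ Finset.Icc 1 m, a ((n : ℤ) - i)) ^ 2 *
        Matrix.det (Matrix.of fun p q : Fin m =>
          ((n : K) - (max (p.1 + 1) (q.1 + 1) : ℕ))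
            * sturmBeta a n (min (p.1 + 1) (q.1 + 1)) ((p.1 : ℤ) + q.1 + 2)) := by
  set P : K := ∏ i ∈ Finset.Icc 1 m, a ((n : ℤ) - i) with hP
  have hprod : P = ∏ p : Fin m, a ((n : ℤ) - (p.1 + 1 : ℕ)) := by
    rw [hP, Fin.prod_univ_eq_prod_range (fun p => a ((n : ℤ) - (p + 1 : ℕ))) m,
      ← Finset.Ico_add_one_right_eq_Icc, Finset.prod_Ico_eq_prod_range]
    simp [add_comm]
  have hPne : P ≠ 0 := by
    rw [hP]
    exact Finset.prod_ne_zero_iff.mpr fun i hi => by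
      rw [Finset.mem_Icc] at hi; exact ha i hi.1 hi.2
  have hmat : (Matrix.of fun p q : Fin m =>
        ((n : K) - (max (p.1 + 1) (q.1 + 1) : ℕ))
          * sturmBeta a n (min (p.1 + 1) (q.1 + 1)) ((p.1 : ℤ) + q.1 + 2))
      = Matrix.of fun p q : Fin m => (a ((n : ℤ) - (p.1 + 1 : ℕ)))⁻¹ *
          (Matrix.of fun p q : Fin m => (a ((n : ℤ) - (q.1 + 1 : ℕ)))⁻¹ *
            (Matrix.of fun p q : Fin m =>
              sturmB a n (min (p.1 + 1) (q.1 + 1)) ((p.1 : ℤ) + q.1 + 2)) p q) p q := by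
    ext p q
    simpa using sturm_entry_key a n m hn ha p q
  rw [hmat, Matrix.det_mul_column, Matrix.det_mul_row]
  have hinv : ∏ p : Fin m, (a ((n : ℤ) - (p.1 + 1 : ℕ)))⁻¹ = P⁻¹ := by
    rw [hprod, Finset.prod_inv_distrib]
  rw [hinv]
  field_simp

end
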